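/- Let f ∈ ℚ[[N^⊕]] be a formal power series with constant term 1 supported on multiples of a fixed primitive γ₀ ∈ N^+, and let ω be a skew-symmetric form on N. Then the map z^γ ↦ f^{ω(γ₀, γ)} · z^γ extends to a well-defined ℚ-algebra automorphism of the completed monoid algebra ℚ[[N^⊕]], where f^{m} for m ∈ ℤ is interpreted via the binomial series (valid since f has constant term 1). -/

import Mathlib

/-!
The automorphism is the twist `∑ g_a X^a ↦ ∑ g_a u^(m a) X^a` by the additive map
`m = ω(γ₀, ·)`; it is multiplicative because `m` is additive. Skew-symmetry gives `m γ₀ = 0`,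
so `u = f`, and with it every integer power of `u`, is supported on `ker m`. Twisting by `m`
therefore fixes these powers, which makes the twists by `m` and by `-m` mutually inverse.
-/

open Finset

namespace MvPowerSeries

variable {σ R : Type*} [CommRing R]

def supportedIn (S : AddSubmonoid (σ →₀ ℕ)) : Submonoid (MvPowerSeries σ R) where
  carrier := {g | ∀ d, coeff d g ≠ 0 → d ∈ S}
  one_mem' d hd := by
    classical
    rw [coeff_one] at hd
    split_ifs at hd with h
    · exact h ▸ S.zero_mem
    · exact absurd rfl hd
  mul_mem' {g h} hg hh d hd := by
    classical
    rw [coeff_mul] at hd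
    obtain ⟨p, hp, hne⟩ := exists_ne_zero_of_sum_ne_zero hd
    rw [← mem_antidiagonal.mp hp]
    exact S.add_mem (hg _ (left_ne_zero_of_mul hne)) (hh _ (right_ne_zero_of_mul hne))

theorem inv_mem_supportedIn {S : AddSubmonoid (σ →₀ ℕ)} (u : (MvPowerSeries σ R)ˣ)
    (hu : (u : MvPowerSeries σ R) ∈ supportedIn S) :
    ((u⁻¹ : (MvPowerSeries σ R)ˣ) : MvPowerSeries σ R) ∈ supportedIn S := by
  classical
  intro d
  induction d using WellFoundedLT.induction with
  | _ d ih =>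
  intro hd
  by_contra hdS
  -- only the term `(0, d)` of `coeff d (u * u⁻¹) = 0` survives, a unit times `coeff d u⁻¹`
  have hsingle : coeff d (u * u⁻¹ : MvPowerSeries σ R) = coeff 0 (u : MvPowerSeries σ R) *
      coeff d (↑u⁻¹ : MvPowerSeries σ R) := by
    rw [coeff_mul]
    refine sum_eq_single_of_mem (0, d) (by simp) fun p hp hp0 => ?_
    have hpd := mem_antidiagonal.mp hp
    have hp1 : p.1 ≠ 0 := fun h => hp0 (Prod.ext h (by rw [← hpd, h, zero_add]))
    by_contra hne
    refine hdS (hpd ▸ S.add_mem (hu _ (left_ne_zero_of_mul hne))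
      (ih _ ?_ (right_ne_zero_of_mul hne)))
    rw [← hpd]
    exact lt_add_of_pos_left _ (pos_iff_ne_zero.mpr hp1)
  rw [Units.mul_inv, coeff_one, if_neg (by rintro rfl; exact hdS S.zero_mem),
    coeff_zero_eq_constantCoeff_apply] at hsingle
  exact hd ((isUnit_constantCoeff _ u.isUnit).mul_right_eq_zero.mp hsingle.symm)

theorem zpow_mem_supportedIn {S : AddSubmonoid (σ →₀ ℕ)} (u : (MvPowerSeries σ R)ˣ)
    (hu : (u : MvPowerSeries σ R) ∈ supportedIn S) (k : ℤ) :
    ((u ^ k : (MvPowerSeries σ R)ˣ) : MvPowerSeries σ R) ∈ supportedIn S := by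
  rcases k with k | k
  · simpa using pow_mem hu k
  · rw [zpow_negSucc, ← inv_pow, Units.val_pow_eq_pow_val]
    exact pow_mem (inv_mem_supportedIn u hu) _

section Twist

variable [DecidableEq σ]

/-- `twist M g = ∑ₐ (coeff a g) • M a * X^a`, written coefficientwise. -/
noncomputable def twist (M : (σ →₀ ℕ) → MvPowerSeries σ R) (g : MvPowerSeries σ R) :
    MvPowerSeries σ R :=
  fun d => ∑ p ∈ antidiagonal d, coeff p.1 g * coeff p.2 (M p.1)

variable (M N : (σ →₀ ℕ) → MvPowerSeries σ R)

theorem coeff_twist (g : MvPowerSeries σ R) (d : σ →₀ ℕ) :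
    coeff d (twist M g) = ∑ p ∈ antidiagonal d, coeff p.1 g * coeff p.2 (M p.1) := rfl

theorem twist_monomial (γ : σ →₀ ℕ) (a : R) :
    twist M (monomial γ a) = M γ * monomial γ a := by
  ext d
  rw [coeff_twist, mul_comm, coeff_mul]
  refine sum_congr rfl fun p _ => ?_
  rcases eq_or_ne p.1 γ with h | h
  · rw [h]
  · rw [coeff_monomial, if_neg h, zero_mul, zero_mul]

theorem twist_add (g h : MvPowerSeries σ R) : twist M (g + h) = twist M g + twist M h := by
  ext d
  simp only [coeff_twist, map_add, add_mul, sum_add_distrib]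

theorem twist_mul (hM : ∀ a b, M (a + b) = M a * M b) (g h : MvPowerSeries σ R) :
    twist M (g * h) = twist M g * twist M h := by
  ext d
  have hsplit : ∀ p ∈ antidiagonal d, coeff p.1 (g * h) * coeff p.2 (M p.1) =
      ∑ q ∈ antidiagonal p.1, ∑ r ∈ antidiagonal p.2,
        coeff q.1 g * coeff q.2 h * (coeff r.1 (M q.1) * coeff r.2 (M q.2)) := fun p _ => by
    rw [coeff_mul, sum_mul]
    refine sum_congr rfl fun q hq => ?_
    rw [← (mem_antidiagonal.mp hq), hM, coeff_mul, mul_sum]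
  rw [coeff_twist, sum_congr rfl hsplit, coeff_mul]
  simp only [coeff_twist, sum_mul_sum, sum_sigma']
  -- both sides sum over `2 × 2` arrays of exponents with total `d`; transpose the array
  apply sum_nbij'
    (fun x ↦ ⟨(x.2.1.1 + x.2.2.1, x.2.1.2 + x.2.2.2), (x.2.1.1, x.2.2.1), (x.2.1.2, x.2.2.2)⟩)
    (fun x ↦ ⟨(x.2.1.1 + x.2.2.1, x.2.1.2 + x.2.2.2), (x.2.1.1, x.2.2.1), (x.2.1.2, x.2.2.2)⟩)
    <;> aesop (add simp [add_assoc, add_left_comm, mul_assoc, mul_left_comm])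

theorem twist_twist (hMN : ∀ a s, coeff s (N a) ≠ 0 → M (a + s) = M a)
    (g : MvPowerSeries σ R) :
    twist M (twist N g) = twist (N * M) g := by
  ext d
  have hinv : ∀ p ∈ antidiagonal d, coeff p.1 (twist N g) * coeff p.2 (M p.1) =
      ∑ q ∈ antidiagonal p.1, coeff q.1 g * (coeff q.2 (N q.1) * coeff p.2 (M q.1)) :=
    fun p _ => by
      rw [coeff_twist, sum_mul]
      refine sum_congr rfl fun q hq => ?_
      by_cases hN : coeff q.2 (N q.1) = 0
      · simp [hN]
      · rw [← mem_antidiagonal.mp hq, hMN _ _ hN, mul_assoc]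
  rw [coeff_twist, sum_congr rfl hinv, coeff_twist]
  simp only [Pi.mul_apply, coeff_mul, mul_sum, sum_sigma']
  apply sum_nbij' (fun x ↦ ⟨(x.2.1, x.2.2 + x.1.2), (x.2.2, x.1.2)⟩)
    (fun x ↦ ⟨(x.1.1 + x.2.1, x.2.2), (x.1.1, x.2.1)⟩) <;> aesop (add simp [add_assoc])

theorem twist_one (g : MvPowerSeries σ R) : twist (fun _ => 1) g = g := by
  ext d
  simp only [coeff_twist, ← coeff_mul, mul_one]

variable (u : (MvPowerSeries σ R)ˣ)

noncomputable def twistAlgHom (m : (σ →₀ ℕ) →+ ℤ) :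
    MvPowerSeries σ R →ₐ[R] MvPowerSeries σ R where
  toFun := twist fun a => ↑(u ^ m a)
  map_one' := by rw [← monomial_zero_one, twist_monomial]; simp
  map_mul' := twist_mul _ fun a b => by simp only [map_add, zpow_add, Units.val_mul]
  map_zero' := by ext d; simp [coeff_twist]
  map_add' := twist_add _
  commutes' r := by
    show twist _ (C r) = C r
    rw [← monomial_zero_eq_C_apply, twist_monomial]
    simp

theorem twistAlgHom_monomial (m : (σ →₀ ℕ) →+ ℤ) (γ : σ →₀ ℕ) (a : R) :
    twistAlgHom u m (monomial γ a) = ↑(u ^ m γ) * monomial γ a :=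
  twist_monomial (fun b => (↑(u ^ m b) : MvPowerSeries σ R)) γ a

theorem twistAlgHom_zero : twistAlgHom u 0 = AlgHom.id R (MvPowerSeries σ R) := by
  ext g : 1
  show twist (fun a => ↑(u ^ (0 : (σ →₀ ℕ) →+ ℤ) a)) g = g
  simpa only [AddMonoidHom.zero_apply, zpow_zero, Units.val_one] using twist_one g

theorem twistAlgHom_comp {m : (σ →₀ ℕ) →+ ℤ}
    (hu : (u : MvPowerSeries σ R) ∈ supportedIn (AddMonoidHom.mker m)) (m' : (σ →₀ ℕ) →+ ℤ) :
    (twistAlgHom u m).comp (twistAlgHom u m') = twistAlgHom u (m' + m) := by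
  ext g : 1
  show twist (fun a => ↑(u ^ m a)) (twist (fun a => ↑(u ^ m' a)) g) =
    twist (fun a => ↑(u ^ (m' + m) a)) g
  rw [twist_twist]
  · congr 1
    ext1 a
    simp only [Pi.mul_apply, AddMonoidHom.add_apply, zpow_add, Units.val_mul]
  · intro a s hs
    have hms : m s = 0 := zpow_mem_supportedIn u hu (m' a) s hs
    rw [map_add, hms, add_zero]

noncomputable def twistAlgEquiv {m : (σ →₀ ℕ) →+ ℤ}
    (hu : (u : MvPowerSeries σ R) ∈ supportedIn (AddMonoidHom.mker m)) :
    MvPowerSeries σ R ≃ₐ[R] MvPowerSeries σ R :=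
  have hu' : (u : MvPowerSeries σ R) ∈ supportedIn (AddMonoidHom.mker (-m)) := fun d hd => by
    simpa [AddMonoidHom.mem_mker] using hu d hd
  AlgEquiv.ofAlgHom (twistAlgHom u m) (twistAlgHom u (-m))
    (by rw [twistAlgHom_comp u hu, neg_add_cancel, twistAlgHom_zero])
    (by rw [twistAlgHom_comp u hu', add_neg_cancel, twistAlgHom_zero])

end Twist

end MvPowerSeries

open MvPowerSeries

theorem wall_crossing_automorphism_exists_general
    (n : ℕ)
    (ω : (Fin n → ℤ) →ₗ[ℤ] ((Fin n → ℤ) →ₗ[ℤ] ℤ))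
    (hskew : ∀ x y, ω x y = - ω y x)
    (γ₀ : Fin n →₀ ℕ)
    (f : MvPowerSeries (Fin n) ℚ)
    (hsupp : ∀ d : Fin n →₀ ℕ, MvPowerSeries.coeff d f ≠ 0 → ∃ k : ℕ, d = k • γ₀)
    (u : (MvPowerSeries (Fin n) ℚ)ˣ) (hu : (u : MvPowerSeries (Fin n) ℚ) = f) :
    ∃ Φ : MvPowerSeries (Fin n) ℚ ≃ₐ[ℚ] MvPowerSeries (Fin n) ℚ,
      ∀ γ : Fin n →₀ ℕ,
        Φ (MvPowerSeries.monomial (R := ℚ) γ 1)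
          = (↑(u ^ (ω (fun i => (γ₀ i : ℤ)) (fun i => (γ i : ℤ)))) :
              MvPowerSeries (Fin n) ℚ) * MvPowerSeries.monomial (R := ℚ) γ 1 := by
  let m : (Fin n →₀ ℕ) →+ ℤ := (ω fun i => (γ₀ i : ℤ)).toAddMonoidHom.comp
    (Finsupp.coeFnAddHom.comp (Finsupp.mapRange.addMonoidHom (Nat.castAddMonoidHom ℤ)))
  have hmγ₀ : m γ₀ = 0 := by
    have := hskew (fun i => (γ₀ i : ℤ)) (fun i => (γ₀ i : ℤ))
    change ω (fun i => (γ₀ i : ℤ)) (fun i => (γ₀ i : ℤ)) = 0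
    omega
  have hker : (u : MvPowerSeries (Fin n) ℚ) ∈ supportedIn (AddMonoidHom.mker m) := by
    intro d hd
    obtain ⟨k, rfl⟩ := hsupp d (hu ▸ hd)
    rw [AddMonoidHom.mem_mker, map_nsmul, hmγ₀, smul_zero]
  exact ⟨twistAlgEquiv u hker, fun γ => twistAlgHom_monomial u m γ 1⟩

/-- Let `f ∈ ℚ[[ℕ^n]]` be a formal power series with constant term 1,
supported on multiples of a fixed primitive `γ₀ ∈ ℕ^n \ {0}`, and let `ω` be a
skew-symmetric form on `ℤ^n`. Then the map `z^γ ↦ f^{ω(γ₀, γ)} · z^γ` extends to a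
well-defined ℚ-algebra automorphism of the completed monoid algebra
`ℚ[[ℕ^n]] = MvPowerSeries (Fin n) ℚ`, where the integer powers `f^m` are interpreted
via the unit `u` with `↑u = f` (which exists since `f` has constant term 1). -/
theorem wall_crossing_automorphism_exists
    (n : ℕ)
    (ω : (Fin n → ℤ) →ₗ[ℤ] ((Fin n → ℤ) →ₗ[ℤ] ℤ))
    (hskew : ∀ x y, ω x y = - ω y x)
    (γ₀ : Fin n →₀ ℕ) (hγ₀ : γ₀ ≠ 0)
    (hprim : ∀ d : ℕ, (∀ i, d ∣ γ₀ i) → d = 1)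
    (f : MvPowerSeries (Fin n) ℚ)
    (hconst : MvPowerSeries.constantCoeff f = 1)
    (hsupp : ∀ d : Fin n →₀ ℕ, MvPowerSeries.coeff d f ≠ 0 → ∃ k : ℕ, d = k • γ₀)
    (u : (MvPowerSeries (Fin n) ℚ)ˣ) (hu : (u : MvPowerSeries (Fin n) ℚ) = f) :
    ∃ Φ : MvPowerSeries (Fin n) ℚ ≃ₐ[ℚ] MvPowerSeries (Fin n) ℚ,
      ∀ γ : Fin n →₀ ℕ,
        Φ (MvPowerSeries.monomial (R := ℚ) γ 1)
          = (↑(u ^ (ω (fun i => (γ₀ i : ℤ)) (fun i => (γ i : ℤ)))) :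
              MvPowerSeries (Fin n) ℚ) * MvPowerSeries.monomial (R := ℚ) γ 1 :=
  wall_crossing_automorphism_exists_general n ω hskew γ₀ f hsupp u hu
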